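/- arXiv:2104.01841 — 2 statements merged into one kernel-verified Lean document; each statement's English description precedes it below -/
import Mathlib

section
/- The category of finite simple graphs and injective graph homomorphisms, equipped with the spine n ↦ K_n (the complete graph on n vertices) and with proxy pushouts given by clique sums (the proxy pushout of a monic span G ←g— K_n —h→ H is the clique sum G #_{K_n} H with its two inclusion monomorphisms), is a spined category. In particular, for any injective homomorphisms g : K_n → G, h : K_n → H, g' : G → G', h' : H → H', the induced homomorphism G #_{K_n} H → G' #_{K_n} H' is again injective and is the unique morphism making the SC2 diagram commute. -/
open CategoryTheory

universe u v

/-- The data of a spine and proxy pushout operation on a category. -/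
structure SpineData (C : Type u) [Category.{v} C] where
  /-- the spine, a functor from the discrete category ℕ -/
  Ω : ℕ → C
  /-- proxy pushout object of a span out of a spine object -/
  P : ∀ {n : ℕ} {G H : C}, (Ω n ⟶ G) → (Ω n ⟶ H) → C
  /-- left structure morphism of the proxy pushout cocone -/
  inl : ∀ {n : ℕ} {G H : C} (g : Ω n ⟶ G) (h : Ω n ⟶ H), G ⟶ P g h
  /-- right structure morphism of the proxy pushout cocone -/
  inr : ∀ {n : ℕ} {G H : C} (g : Ω n ⟶ G) (h : Ω n ⟶ H), H ⟶ P g h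

variable {C : Type u} [Category.{v} C]

/-- (SC1): every object admits a morphism to some spine object. -/
def SpineData.SC1 (D : SpineData C) : Prop :=
  ∀ X : C, ∃ n : ℕ, Nonempty (X ⟶ D.Ω n)

/-- (SC2): unique compatibility morphisms between proxy pushouts of extended spans. -/
def SpineData.SC2 (D : SpineData C) : Prop :=
  ∀ {n : ℕ} {G H G' H' : C} (g : D.Ω n ⟶ G) (h : D.Ω n ⟶ H) (g' : G ⟶ G') (h' : H ⟶ H'),
    ∃! m : D.P g h ⟶ D.P (g ≫ g') (h ≫ h'),
      D.inl g h ≫ m = g' ≫ D.inl (g ≫ g') (h ≫ h') ∧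
      D.inr g h ≫ m = h' ≫ D.inr (g ≫ g') (h ≫ h')

/-- A spined category is a category equipped with spine data satisfying SC1 and SC2. -/
def SpineData.IsSpined (D : SpineData C) : Prop := D.SC1 ∧ D.SC2

/-- An S-functor over a spined category `(C, Ω, 𝔓)`: a spinal functor to the spined
category `Nat` (the poset `(ℕ, ≤)` with spine `n ↦ n` and proxy pushouts given by maxima).
Equivalently: a monotone map preserving the spine and proxy pushouts. -/
structure SFunctor (D : SpineData C) where
  val : C → ℕ
  mono : ∀ {X Y : C}, (X ⟶ Y) → val X ≤ val Y
  spine : ∀ n : ℕ, val (D.Ω n) = n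
  pp : ∀ {n : ℕ} {G H : C} (g : D.Ω n ⟶ G) (h : D.Ω n ⟶ H),
    val (D.P g h) = max (val G) (val H)

/-- An object is pseudo-chordal if all S-functors agree on it. -/
def PseudoChordal (D : SpineData C) (X : C) : Prop :=
  ∀ F G : SFunctor D, F.val X = G.val X

/-- The chordal objects: the smallest collection of objects containing the spine and
closed under proxy pushouts. -/
inductive Chordal (D : SpineData C) : C → Prop
  | spine (n : ℕ) : Chordal D (D.Ω n)
  | push {n : ℕ} {A B : C} (a : D.Ω n ⟶ A) (b : D.Ω n ⟶ B) :
      Chordal D A → Chordal D B → Chordal D (D.P a b)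

/-- The set of widths of pseudo-chordal completions of `X`: `k` is such a width
iff there is a morphism `X ⟶ H` with `H` pseudo-chordal and every S-functor takes
the value `k` on `H`. -/
def pcWidths (D : SpineData C) (X : C) : Set ℕ :=
  {k | ∃ H : C, Nonempty (X ⟶ H) ∧ PseudoChordal D H ∧ ∀ F : SFunctor D, F.val H = k}

/-- The set of widths of chordal completions of `X`. -/
def chWidths (D : SpineData C) (X : C) : Set ℕ :=
  {k | ∃ H : C, Nonempty (X ⟶ H) ∧ Chordal D H ∧ ∀ F : SFunctor D, F.val H = k}

/-- The triangulation number: minimum width of a pseudo-chordal completion. -/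
noncomputable def tri (D : SpineData C) (X : C) : ℕ := sInf (pcWidths D X)

/-- The chordal triangulation number: minimum width of a chordal completion. -/
noncomputable def triCh (D : SpineData C) (X : C) : ℕ := sInf (chWidths D X)

/-- The order of an object: least `n` admitting a morphism `X ⟶ Ω n`. -/
noncomputable def ordOf (D : SpineData C) (X : C) : ℕ := sInf {n : ℕ | Nonempty (X ⟶ D.Ω n)}

/-- A finite simple graph: a finite vertex type together with a simple graph on it. -/
structure FinGraph : Type 1 where
  V : Type
  [fin : Finite V]
  G : SimpleGraph V

attribute [instance] FinGraph.fin

namespace Glue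

variable {S A B : FinGraph} (g : S.G →g A.G) (h : S.G →g B.G)

/-- The identification relation of the `S`-sum: `inl (g s)` is glued to `inr (h s)`. -/
def rel : (A.V ⊕ B.V) → (A.V ⊕ B.V) → Prop :=
  fun x y => ∃ s : S.V, x = Sum.inl (g s) ∧ y = Sum.inr (h s)

/-- Vertices of the `S`-sum: the disjoint union with `g s` and `h s` identified. -/
def GV := Quot (rel g h)

instance : Finite (GV g h) :=
  Finite.of_surjective (Quot.mk (rel g h)) fun q => Quot.inductionOn q fun x => ⟨x, rfl⟩

/-- Left injection on vertices. -/
def mkl (a : A.V) : GV g h := Quot.mk _ (Sum.inl a)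

/-- Right injection on vertices. -/
def mkr (b : B.V) : GV g h := Quot.mk _ (Sum.inr b)

/-- Adjacency in the `S`-sum: edges coming from `A` or from `B` (with loops and
parallel edges removed by the quotient and the `x ≠ y` condition). -/
def adj (x y : GV g h) : Prop :=
  x ≠ y ∧ ((∃ a b, A.G.Adj a b ∧ x = mkl g h a ∧ y = mkl g h b) ∨
           (∃ a b, B.G.Adj a b ∧ x = mkr g h a ∧ y = mkr g h b))

/-- The `S`-sum graph `A #_S B`. -/
def graph : SimpleGraph (GV g h) where
  Adj := adj g h
  symm := ⟨by
    rintro x y ⟨hne, hc⟩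
    refine ⟨hne.symm, ?_⟩
    rcases hc with ⟨a, b, hab, hx, hy⟩ | ⟨a, b, hab, hx, hy⟩
    · exact Or.inl ⟨b, a, hab.symm, hy, hx⟩
    · exact Or.inr ⟨b, a, hab.symm, hy, hx⟩⟩
  loopless := ⟨fun x hx => hx.1 rfl⟩

/-- The `S`-sum as a finite graph. -/
def obj : FinGraph := ⟨GV g h, graph g h⟩

open Classical in
/-- Normal form for vertices of the disjoint union modulo gluing. -/
noncomputable def norm : A.V ⊕ B.V → A.V ⊕ B.V
  | .inl a => .inl a
  | .inr b => if hb : ∃ s, h s = b then .inl (g (Classical.choose hb)) else .inr b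

lemma norm_rel (hh : Function.Injective h) {x y : A.V ⊕ B.V} (hxy : rel g h x y) :
    norm g h x = norm g h y := by
  obtain ⟨s, rfl, rfl⟩ := hxy
  have hb : ∃ t : S.V, h t = h s := ⟨s, rfl⟩
  have hc : Classical.choose hb = s := hh (Classical.choose_spec hb)
  simp only [norm, dif_pos hb, hc]

lemma norm_eqvGen (hh : Function.Injective h) {x y : A.V ⊕ B.V}
    (hxy : Relation.EqvGen (rel g h) x y) : norm g h x = norm g h y := by
  induction hxy with
  | rel _ _ hr => exact norm_rel g h hh hr
  | refl => rfl
  | symm _ _ _ ih => exact ih.symm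
  | trans _ _ _ _ _ ih₁ ih₂ => exact ih₁.trans ih₂

lemma mkl_inj (hh : Function.Injective h) : Function.Injective (mkl g h) := by
  intro a a' e
  have := norm_eqvGen g h hh (Quot.eq.1 e)
  simpa [norm] using this

lemma mkr_inj (hg : Function.Injective g) (hh : Function.Injective h) :
    Function.Injective (mkr g h) := by
  intro b b' e
  have hn := norm_eqvGen g h hh (Quot.eq.1 e)
  by_cases hb : ∃ s, h s = b <;> by_cases hb' : ∃ s, h s = b'
  · simp only [norm, dif_pos hb, dif_pos hb'] at hn
    have : Classical.choose hb = Classical.choose hb' := hg (Sum.inl.inj hn)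
    rw [← Classical.choose_spec hb, ← Classical.choose_spec hb', this]
  · simp only [norm, dif_pos hb, dif_neg hb'] at hn
    exact absurd hn (by simp)
  · simp only [norm, dif_neg hb, dif_pos hb'] at hn
    exact absurd hn (by simp)
  · simp only [norm, dif_neg hb, dif_neg hb'] at hn
    exact Sum.inr.inj hn

/-- The inclusion homomorphism `A → A #_S B`. -/
def inlHom (hg : Function.Injective g) (hh : Function.Injective h) :
    A.G →g (obj g h).G where
  toFun := mkl g h
  map_rel' := fun {a b} hab =>
    ⟨fun e => hab.ne (mkl_inj g h hh e), Or.inl ⟨a, b, hab, rfl, rfl⟩⟩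

/-- The inclusion homomorphism `B → A #_S B`. -/
def inrHom (hg : Function.Injective g) (hh : Function.Injective h) :
    B.G →g (obj g h).G where
  toFun := mkr g h
  map_rel' := fun {a b} hab =>
    ⟨fun e => hab.ne (mkr_inj g h hg hh e), Or.inr ⟨a, b, hab, rfl, rfl⟩⟩

lemma inlHom_inj (hg : Function.Injective g) (hh : Function.Injective h) :
    Function.Injective (inlHom g h hg hh) := mkl_inj g h hh

lemma inrHom_inj (hg : Function.Injective g) (hh : Function.Injective h) :
    Function.Injective (inrHom g h hg hh) := mkr_inj g h hg hh

end Glue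

/-- The complete graph `K n` on vertex set `Fin n`. -/
abbrev KG (n : ℕ) : FinGraph := ⟨Fin n, (⊤ : SimpleGraph (Fin n))⟩
/-- `Graph_mono`: the category of finite simple graphs and injective graph
homomorphisms. -/
instance : Category.{0, 1} FinGraph where
  Hom A B := {f : A.G →g B.G // Function.Injective f}
  id A := ⟨SimpleGraph.Hom.id, fun _ _ e => e⟩
  comp f g := ⟨g.1.comp f.1, fun _ _ e => f.2 (g.2 e)⟩

/-- The spine data of `Graph_mono`: spine `n ↦ K n` and proxy pushouts given by
clique sums along complete graphs. -/
def GraphSpine : SpineData FinGraph where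
  Ω n := KG n
  P {_ _ _} g h := Glue.obj g.1 h.1
  inl {_ _ _} g h := ⟨Glue.inlHom g.1 h.1 g.2 h.2, Glue.inlHom_inj g.1 h.1 g.2 h.2⟩
  inr {_ _ _} g h := ⟨Glue.inrHom g.1 h.1 g.2 h.2, Glue.inrHom_inj g.1 h.1 g.2 h.2⟩

/-!
A finite graph embeds into the complete graph on its own vertex set, which gives SC1. For SC2,
the map `G #_{K_n} H → G' #_{K_n} H'` is induced by `Sum.map g' h'` on the disjoint unions.
Because all maps are injective, each vertex of `K_n` is glued exactly once, so two vertices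
of a clique sum coincide iff they are equal in the disjoint union or are the two copies of a
vertex of `K_n`; `Sum.map g' h'` reflects both, hence the induced map is injective. It is
unique because the clique sum is covered by the images of `G` and `H`.
-/

namespace Glue

variable {S A B : FinGraph} {g : S.G →g A.G} {h : S.G →g B.G}

theorem mk_eq_mk_iff (hg : Function.Injective g) (hh : Function.Injective h)
    {x y : A.V ⊕ B.V} :
    Quot.mk (rel g h) x = Quot.mk (rel g h) y ↔ x = y ∨ rel g h x y ∨ rel g h y x := by
  let R : A.V ⊕ B.V → A.V ⊕ B.V → Prop := fun x y => x = y ∨ rel g h x y ∨ rel g h y x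
  have hR : Equivalence R := by
    refine ⟨fun _ => Or.inl rfl, fun hxy => ?_, fun hxy hyz => ?_⟩
    · rcases hxy with rfl | hxy | hyx
      exacts [Or.inl rfl, Or.inr (Or.inr hxy), Or.inr (Or.inl hyx)]
    · rcases hxy with rfl | ⟨s, rfl, rfl⟩ | ⟨s, rfl, rfl⟩
      · exact hyz
      · rcases hyz with rfl | ⟨t, ht, -⟩ | ⟨t, rfl, ht⟩
        · exact Or.inr (Or.inl ⟨s, rfl, rfl⟩)
        · cases ht
        · rw [hh (Sum.inr_injective ht)]
          exact Or.inl rfl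
      · rcases hyz with rfl | ⟨t, ht, rfl⟩ | ⟨t, -, ht⟩
        · exact Or.inr (Or.inr ⟨s, rfl, rfl⟩)
        · rw [hg (Sum.inl_injective ht)]
          exact Or.inl rfl
        · cases ht
  refine ⟨fun hxy => hR.eqvGen_iff.1 (Relation.EqvGen.mono ?_ _ _ (Quot.eq.1 hxy)), ?_⟩
  · exact fun _ _ hr => Or.inr (Or.inl hr)
  · rintro (rfl | hxy | hyx)
    exacts [rfl, Quot.sound hxy, (Quot.sound hyx).symm]

theorem GV.funext {X : Sort*} {f₁ f₂ : GV g h → X} (hl : ∀ a, f₁ (mkl g h a) = f₂ (mkl g h a))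
    (hr : ∀ b, f₁ (mkr g h b) = f₂ (mkr g h b)) : f₁ = f₂ := by
  funext x
  induction x using Quot.ind with
  | mk x => cases x with
    | inl a => exact hl a
    | inr b => exact hr b

variable {A' B' : FinGraph} (g' : A.G →g A'.G) (h' : B.G →g B'.G)

theorem rel.sumMap {x y : A.V ⊕ B.V} (hxy : rel g h x y) :
    rel (g'.comp g) (h'.comp h) (Sum.map g' h' x) (Sum.map g' h' y) := by
  obtain ⟨s, rfl, rfl⟩ := hxy
  exact ⟨s, rfl, rfl⟩

theorem rel_sumMap_iff (hg' : Function.Injective g') (hh' : Function.Injective h')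
    {x y : A.V ⊕ B.V} :
    rel (g'.comp g) (h'.comp h) (Sum.map g' h' x) (Sum.map g' h' y) ↔ rel g h x y := by
  refine ⟨?_, rel.sumMap g' h'⟩
  rintro ⟨s, hx, hy⟩
  have hmap : Function.Injective (Sum.map g' h') := Sum.map_injective.2 ⟨hg', hh'⟩
  exact ⟨s, @hmap x (.inl (g s)) hx, @hmap y (.inr (h s)) hy⟩

variable (g h) in
def map : GV g h → GV (g'.comp g) (h'.comp h) :=
  Quot.map (Sum.map g' h') fun _ _ => rel.sumMap g' h'

theorem map_injective (hg : Function.Injective g) (hh : Function.Injective h)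
    (hg' : Function.Injective g') (hh' : Function.Injective h') :
    Function.Injective (map g h g' h') := by
  have hgg' : Function.Injective (g'.comp g) := hg'.comp hg
  have hhh' : Function.Injective (h'.comp h) := hh'.comp hh
  have hmap : Function.Injective (Sum.map g' h') := Sum.map_injective.2 ⟨hg', hh'⟩
  rintro ⟨x⟩ ⟨y⟩ hxy
  change Quot.mk _ (Sum.map g' h' x) = Quot.mk _ (Sum.map g' h' y) at hxy
  rw [mk_eq_mk_iff hgg' hhh', rel_sumMap_iff g' h' hg' hh', rel_sumMap_iff g' h' hg' hh'] at hxy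
  change Quot.mk _ x = Quot.mk _ y
  rw [mk_eq_mk_iff hg hh]
  exact hxy.imp_left (@hmap x y)

theorem map_adj (hg : Function.Injective g) (hh : Function.Injective h)
    (hg' : Function.Injective g') (hh' : Function.Injective h') {x y : GV g h}
    (hxy : (graph g h).Adj x y) :
    (graph (g'.comp g) (h'.comp h)).Adj (map g h g' h' x) (map g h g' h' y) := by
  obtain ⟨hne, ⟨a, b, hab, rfl, rfl⟩ | ⟨a, b, hab, rfl, rfl⟩⟩ := hxy
  · exact ⟨(map_injective g' h' hg hh hg' hh').ne hne,
      Or.inl ⟨g' a, g' b, g'.map_rel hab, rfl, rfl⟩⟩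
  · exact ⟨(map_injective g' h' hg hh hg' hh').ne hne,
      Or.inr ⟨h' a, h' b, h'.map_rel hab, rfl, rfl⟩⟩

end Glue

noncomputable def FinGraph.toKG (X : FinGraph) : X ⟶ KG (Nat.card X.V) :=
  ⟨⟨Finite.equivFin X.V, fun hab => (Finite.equivFin X.V).injective.ne hab.ne⟩,
    (Finite.equivFin X.V).injective⟩

namespace GraphSpine

variable {n : ℕ} {G H : FinGraph} {g : GraphSpine.Ω n ⟶ G} {h : GraphSpine.Ω n ⟶ H}

theorem hom_ext {X : FinGraph} {m₁ m₂ : GraphSpine.P g h ⟶ X}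
    (hl : GraphSpine.inl g h ≫ m₁ = GraphSpine.inl g h ≫ m₂)
    (hr : GraphSpine.inr g h ≫ m₁ = GraphSpine.inr g h ≫ m₂) : m₁ = m₂ := by
  refine Subtype.ext (RelHom.ext (congrFun (Glue.GV.funext (f₁ := m₁.1) (f₂ := m₂.1) ?_ ?_)))
  · exact fun a => congrArg (fun f : G ⟶ X => f.1 a) hl
  · exact fun b => congrArg (fun f : H ⟶ X => f.1 b) hr

variable (g h) in
def map {G' H' : FinGraph} (g' : G ⟶ G') (h' : H ⟶ H') :
    GraphSpine.P g h ⟶ GraphSpine.P (g ≫ g') (h ≫ h') :=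
  ⟨⟨Glue.map g.1 h.1 g'.1 h'.1, Glue.map_adj g'.1 h'.1 g.2 h.2 g'.2 h'.2⟩,
    Glue.map_injective g'.1 h'.1 g.2 h.2 g'.2 h'.2⟩

end GraphSpine

/-- the category of finite simple graphs and injective graph homomorphisms,
with spine `n ↦ K n` and clique sums along complete graphs as proxy pushouts, is a
spined category.  (SC2, unfolded, says precisely that for injective homomorphisms
`g : K n → G`, `h : K n → H`, `g' : G → G'`, `h' : H → H'`, the induced homomorphism
`G #_{K n} H → G' #_{K n} H'` is injective and is the unique morphism making the
relevant diagram commute.) -/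
theorem graphMono_isSpined : GraphSpine.IsSpined :=
  ⟨fun X => ⟨_, ⟨X.toKG⟩⟩, fun g h g' h' =>
    ⟨GraphSpine.map g h g' h', ⟨rfl, rfl⟩, fun _ ⟨hl, hr⟩ => GraphSpine.hom_ext hl hr⟩⟩
end

section
/- For every n ≥ 3 and every S-functor F over Graph_mono, F[K_n #_{K_1} C_n] = n, where K_n #_{K_1} C_n is the graph obtained by identifying one vertex of the complete graph K_n with one vertex of the n-cycle C_n. In particular, the graph K_n #_{K_1} C_n is a pseudo-chordal object of Graph_mono. -/
open CategoryTheory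

universe u v

variable {C : Type u} [Category.{v} C]

/-- The cycle graph `C n` on vertex set `Fin n`. -/
abbrev CycG (n : ℕ) : FinGraph := ⟨Fin n, SimpleGraph.cycleGraph n⟩

/-- The injective homomorphism `K 1 → A` sending the unique vertex to `v`. -/
def pointTo (A : FinGraph) (v : A.V) : KG 1 ⟶ A :=
  ⟨⟨fun _ => v, fun {a b} hab => absurd (Subsingleton.elim a b) hab.ne⟩,
    fun a b _ => Subsingleton.elim a b⟩

namespace SFunctor

variable {D : SpineData C} (F : SFunctor D)

lemma val_P_eq_left_of_hom {m : ℕ} {G H : C} (g : D.Ω m ⟶ G) (h : D.Ω m ⟶ H) (f : H ⟶ G) :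
    F.val (D.P g h) = F.val G := by
  rw [F.pp, max_eq_left (F.mono f)]

end SFunctor

lemma pseudoChordal_of_forall_val_eq {D : SpineData C} {X : C} {k : ℕ}
    (hX : ∀ F : SFunctor D, F.val X = k) : PseudoChordal D X :=
  fun F G => (hX F).trans (hX G).symm

def FinGraph.homKG {n : ℕ} (G : SimpleGraph (Fin n)) : (⟨Fin n, G⟩ : FinGraph) ⟶ KG n :=
  ⟨⟨id, fun hab => hab.ne⟩, fun _ _ e => e⟩

/-- for every `n ≥ 3` and every S-functor `F` over `Graph_mono`,
`F[K n #_{K 1} C n] = n`, where `K n #_{K 1} C n` is obtained by identifying a vertex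
of the complete graph `K n` with a vertex of the `n`-cycle `C n`.  In particular this
(non-chordal) graph is pseudo-chordal. -/
theorem clique_cycle_sum_pseudoChordal (n : ℕ) (hn : 3 ≤ n) :
    (∀ F : SFunctor GraphSpine,
      F.val (GraphSpine.P (pointTo (KG n) ⟨0, by omega⟩) (pointTo (CycG n) ⟨0, by omega⟩)) = n) ∧
    PseudoChordal GraphSpine
      (GraphSpine.P (pointTo (KG n) ⟨0, by omega⟩) (pointTo (CycG n) ⟨0, by omega⟩)) := by
  have hval : ∀ F : SFunctor GraphSpine,
      F.val (GraphSpine.P (pointTo (KG n) ⟨0, by omega⟩) (pointTo (CycG n) ⟨0, by omega⟩)) = n :=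
    fun F => (F.val_P_eq_left_of_hom _ _ (FinGraph.homKG _)).trans (F.spine n)
  exact ⟨hval, pseudoChordal_of_forall_val_eq hval⟩
end
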